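/- Action of a paradifferential operator with a symbol of limited smoothness (Fourier-coefficient form): Let m ∈ ℝ, s ∈ ℝ, γ₀ > 1 and K > 0. Fix δ ∈ (0, 1/4] and a function χ : ℝ → ℝ with 0 ≤ χ ≤ 1 and χ(x) = 0 whenever |x| ≥ 1.9. For each n ∈ ℤ let b_n : ℝ → ℂ satisfy |b_n(ξ)| ≤ K·⟨n⟩^{−γ₀}·⟨ξ⟩^m for all ξ ∈ ℝ. Then there exists a constant C > 0, depending only on s, m, γ₀, δ, such that for every sequence v : ℤ → ℂ with ‖v‖_s < ∞, the sequence w defined by w_j := Σ_{k ∈ ℤ} χ((j−k)/(δ·⟨j+k⟩))·b_{j−k}((j+k)/2)·v_k (for each j this sum has only finitely many nonzero terms) satisfies ‖w‖_{s−m} ≤ C·K·‖v‖_s. -/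

import Mathlib

/-- The `H^s` Sobolev norm of a sequence of Fourier coefficients. -/
noncomputable def Hnorm (s : ℝ) (u : ℤ → ℂ) : ℝ :=
  Real.sqrt (∑' j : ℤ, (max 1 |(j : ℝ)|) ^ (2 * s) * ‖u j‖ ^ 2)

/-- Finiteness of the `H^s` Sobolev norm of a sequence of Fourier coefficients. -/
def HSummable (s : ℝ) (u : ℤ → ℂ) : Prop :=
  Summable fun j : ℤ => (max 1 |(j : ℝ)|) ^ (2 * s) * ‖u j‖ ^ 2

/-- The Fourier coefficients of the Bony-Weyl paradifferential operator with symbol of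
spatial Fourier coefficients `b_n(ξ)` applied to `v`, with cut-off `χ(·/δ·)`. -/
noncomputable def paraWn (δ : ℝ) (χ : ℝ → ℝ) (b : ℤ → ℝ → ℂ) (v : ℤ → ℂ) (j : ℤ) : ℂ :=
  ∑' k : ℤ,
    (χ (((j : ℝ) - (k : ℝ)) / (δ * max 1 |(j : ℝ) + (k : ℝ)|)) : ℂ) *
      b (j - k) (((j : ℝ) + (k : ℝ)) / 2) * v k

/-! On the support of the cut-off, `|j - k| ≤ 1.9 δ ⟨j + k⟩ ≤ ⟨j + k⟩ / 2`, so that `⟨j⟩`, `⟨k⟩`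
and `⟨(j + k) / 2⟩` agree up to a factor `4`. Hence `⟨j⟩^{s-m} |w_j|` is bounded by
`K 4^{|m|+|s|} Σ_k ⟨j - k⟩^{-γ₀} ⟨k⟩^s |v_k|`, a convolution of the `H^s` weights of `v` with the
kernel `⟨n⟩^{-γ₀}`, which is summable because `γ₀ > 1`. Young's inequality `ℓ¹ ⋆ ℓ² ⊆ ℓ²`,
proved in `ℝ≥0∞` where every series converges, concludes. -/

open scoped ENNReal NNReal

local notation "⟪" x "⟫" => max 1 |x|

theorem rpow_le_rpow_abs_mul_rpow {c x y : ℝ} (t : ℝ) (hx : 0 < x) (hy : 0 < y)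
    (hxy : x ≤ c * y) (hyx : y ≤ c * x) : x ^ t ≤ c ^ |t| * y ^ t := by
  have hc : 0 < c := pos_of_mul_pos_left (hy.trans_le hyx) hx.le
  rcases le_total 0 t with ht | ht
  · calc x ^ t ≤ (c * y) ^ t := by gcongr
      _ = c ^ |t| * y ^ t := by rw [abs_of_nonneg ht, Real.mul_rpow hc.le hy.le]
  · calc x ^ t ≤ (c⁻¹ * y) ^ t :=
          Real.rpow_le_rpow_of_nonpos (by positivity) (by rw [inv_mul_le_iff₀ hc]; exact hyx) ht
      _ = c ^ |t| * y ^ t := by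
          rw [abs_of_nonpos ht, Real.mul_rpow (by positivity) hy.le, Real.inv_rpow hc.le,
            Real.rpow_neg hc.le]

theorem max_one_abs_le_and_le_four_mul {x y : ℝ} (h : |x - y| ≤ ⟪x + y⟫ / 2) :
    ⟪x⟫ ≤ ⟪x + y⟫ ∧ ⟪x + y⟫ ≤ 4 * ⟪x⟫ := by
  have hx : 2 * x = (x + y) + (x - y) := by ring
  have hupper : 2 * |x| ≤ |x + y| + |x - y| := by
    rw [← abs_two, ← abs_mul, hx]; exact abs_add_le _ _
  have hlower : |x + y| - |x - y| ≤ 2 * |x| := by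
    rw [← abs_two, ← abs_mul, hx]; exact abs_sub_abs_le_abs_add _ _
  have h1 : (1 : ℝ) ≤ ⟪x⟫ := le_max_left _ _
  have h2 : |x| ≤ ⟪x⟫ := le_max_right _ _
  have h3 : |x + y| ≤ ⟪x + y⟫ := le_max_right _ _
  constructor
  · exact max_le (le_max_left _ _) (by linarith)
  · rcases max_cases 1 |x + y| with ⟨he, -⟩ | ⟨he, -⟩ <;> rw [he] at h ⊢ <;> linarith

theorem abs_le_half_of_cutoff_ne_zero {χ : ℝ → ℝ} (hχ : ∀ x : ℝ, (1.9 : ℝ) ≤ |x| → χ x = 0)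
    {δ L d : ℝ} (hδ0 : 0 < δ) (hδ1 : δ ≤ 1 / 4) (hL : 0 < L) (h : χ (d / (δ * L)) ≠ 0) :
    |d| ≤ L / 2 := by
  have hlt : |d / (δ * L)| < 1.9 := not_le.1 fun h' => h (hχ _ h')
  rw [abs_div, abs_of_pos (mul_pos hδ0 hL), div_lt_iff₀ (mul_pos hδ0 hL)] at hlt
  nlinarith

theorem summable_max_one_abs_rpow_neg {γ : ℝ} (hγ : 1 < γ) :
    Summable fun n : ℤ => ⟪(n : ℝ)⟫ ^ (-γ) := by
  refine (Real.summable_abs_int_rpow hγ).congr_cofinite ?_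
  filter_upwards [(Set.finite_singleton (0 : ℤ)).compl_mem_cofinite] with n hn
  rw [max_eq_right]
  exact_mod_cast Int.one_le_abs hn

theorem ENNReal.two_mul_le_add_sq (a b : ℝ≥0∞) : 2 * a * b ≤ a ^ 2 + b ^ 2 := by
  rcases eq_or_ne a ⊤ with rfl | ha
  · simp
  rcases eq_or_ne b ⊤ with rfl | hb
  · simp
  lift a to ℝ≥0 using ha
  lift b to ℝ≥0 using hb
  exact_mod_cast _root_.two_mul_le_add_sq a b

theorem ENNReal.tsum_mul_sq_le {ι : Type*} (a c : ι → ℝ≥0∞) :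
    (∑' i, a i * c i) ^ 2 ≤ (∑' i, a i) * ∑' i, a i * c i ^ 2 := by
  have hprod : ∀ f g : ι → ℝ≥0∞, (∑' i, f i) * (∑' l, g l) = ∑' i, ∑' l, f i * g l :=
    fun f g => by simp_rw [ENNReal.tsum_mul_left, ENNReal.tsum_mul_right]
  have h2 : 2 * (∑' i, a i * c i) ^ 2 ≤ 2 * ((∑' i, a i) * ∑' i, a i * c i ^ 2) :=
    calc 2 * (∑' i, a i * c i) ^ 2
        = ∑' i, ∑' l, a i * a l * (2 * c i * c l) := by
          rw [sq, hprod, ← ENNReal.tsum_mul_left]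
          refine tsum_congr fun i => ?_
          rw [← ENNReal.tsum_mul_left]
          exact tsum_congr fun l => by ring
      _ ≤ ∑' i, ∑' l, a i * a l * (c i ^ 2 + c l ^ 2) := by
          gcongr with i l
          exact ENNReal.two_mul_le_add_sq _ _
      _ = (∑' i, a i * c i ^ 2) * (∑' l, a l) + (∑' i, a i) * ∑' l, a l * c l ^ 2 := by
          rw [hprod, hprod, ← ENNReal.tsum_add]
          refine tsum_congr fun i => ?_
          rw [← ENNReal.tsum_add]
          exact tsum_congr fun l => by ring
      _ = 2 * ((∑' i, a i) * ∑' i, a i * c i ^ 2) := by ring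
  exact (ENNReal.mul_le_mul_iff_right two_ne_zero ENNReal.ofNat_ne_top).1 h2

theorem ENNReal.tsum_conv_sq_le {G : Type*} [AddGroup G] (a c : G → ℝ≥0∞) :
    ∑' j, (∑' k, a (j - k) * c k) ^ 2 ≤ (∑' n, a n) ^ 2 * ∑' k, c k ^ 2 := by
  have hshift : ∀ j, ∑' k, a (j - k) = ∑' n, a n := fun j => (Equiv.subLeft j).tsum_eq a
  have hshift' : ∀ k, ∑' j, a (j - k) = ∑' n, a n := fun k => (Equiv.subRight k).tsum_eq a
  calc ∑' j, (∑' k, a (j - k) * c k) ^ 2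
      ≤ ∑' j, (∑' n, a n) * ∑' k, a (j - k) * c k ^ 2 := by
        gcongr with j
        exact hshift j ▸ ENNReal.tsum_mul_sq_le _ _
    _ = (∑' n, a n) * ∑' k, (∑' j, a (j - k)) * c k ^ 2 := by
        simp_rw [ENNReal.tsum_mul_left, ← ENNReal.tsum_mul_right]
        rw [ENNReal.tsum_comm]
    _ = (∑' n, a n) ^ 2 * ∑' k, c k ^ 2 := by
        simp_rw [hshift', ENNReal.tsum_mul_left]
        ring

/-- `⟨j⟩^s |u_j|`, taken in `ℝ≥0∞` so that its square sums without a summability side condition. -/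
noncomputable def sobolevWeight (s : ℝ) (u : ℤ → ℂ) (j : ℤ) : ℝ≥0∞ :=
  ENNReal.ofReal (⟪(j : ℝ)⟫ ^ s) * ‖u j‖ₑ

theorem sobolevWeight_sq (s : ℝ) (u : ℤ → ℂ) (j : ℤ) :
    sobolevWeight s u j ^ 2 = ENNReal.ofReal (⟪(j : ℝ)⟫ ^ (2 * s) * ‖u j‖ ^ 2) := by
  rw [sobolevWeight, ← ofReal_norm, ← ENNReal.ofReal_mul (by positivity),
    ← ENNReal.ofReal_pow (by positivity), mul_pow, ← Real.rpow_mul_natCast (by positivity),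
    mul_comm s]
  norm_num

theorem hSummable_iff_tsum_sobolevWeight_sq_ne_top (s : ℝ) (u : ℤ → ℂ) :
    HSummable s u ↔ ∑' j, sobolevWeight s u j ^ 2 ≠ ∞ := by
  simp_rw [sobolevWeight_sq]
  refine ⟨Summable.tsum_ofReal_ne_top, fun h => ?_⟩
  exact (ENNReal.summable_toReal h).congr fun j => ENNReal.toReal_ofReal (by positivity)

theorem hnorm_eq_sqrt_toReal_tsum_sobolevWeight_sq (s : ℝ) (u : ℤ → ℂ) :
    Hnorm s u = √(∑' j, sobolevWeight s u j ^ 2).toReal := by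
  simp_rw [sobolevWeight_sq, ENNReal.tsum_toReal_eq fun _ => ENNReal.ofReal_ne_top]
  simp only [Hnorm]
  congr 1
  exact tsum_congr fun j => (ENNReal.toReal_ofReal (by positivity)).symm

theorem hSummable_and_hnorm_le_of_tsum_sobolevWeight_sq_le {s t L : ℝ} {u v : ℤ → ℂ}
    (hL : 0 ≤ L) (hv : HSummable s v)
    (h : ∑' j, sobolevWeight t u j ^ 2 ≤ ENNReal.ofReal L ^ 2 * ∑' j, sobolevWeight s v j ^ 2) :
    HSummable t u ∧ Hnorm t u ≤ L * Hnorm s v := by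
  rw [hSummable_iff_tsum_sobolevWeight_sq_ne_top] at hv ⊢
  have hfin : ENNReal.ofReal L ^ 2 * ∑' j, sobolevWeight s v j ^ 2 ≠ ∞ :=
    ENNReal.mul_ne_top (by simp) hv
  refine ⟨ne_top_of_le_ne_top hfin h, ?_⟩
  rw [hnorm_eq_sqrt_toReal_tsum_sobolevWeight_sq, hnorm_eq_sqrt_toReal_tsum_sobolevWeight_sq]
  calc √(∑' j, sobolevWeight t u j ^ 2).toReal
      ≤ √(ENNReal.ofReal L ^ 2 * ∑' j, sobolevWeight s v j ^ 2).toReal :=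
        Real.sqrt_le_sqrt (ENNReal.toReal_mono hfin h)
    _ = L * √(∑' j, sobolevWeight s v j ^ 2).toReal := by
        rw [ENNReal.toReal_mul, ENNReal.toReal_pow, ENNReal.toReal_ofReal hL,
          Real.sqrt_mul (sq_nonneg L), Real.sqrt_sq hL]

section paraWn

variable {m s γ₀ K δ : ℝ} {χ : ℝ → ℝ} {b : ℤ → ℝ → ℂ}

theorem rpow_mul_norm_cutoff_mul_symbol_le (hδ0 : 0 < δ) (hδ1 : δ ≤ 1 / 4)
    (hχ0 : ∀ x, 0 ≤ χ x) (hχ1 : ∀ x, χ x ≤ 1) (hχ : ∀ x : ℝ, (1.9 : ℝ) ≤ |x| → χ x = 0)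
    (hK : 0 ≤ K) (hb : ∀ n : ℤ, ∀ ξ : ℝ, ‖b n ξ‖ ≤ K * ⟪(n : ℝ)⟫ ^ (-γ₀) * ⟪ξ⟫ ^ m)
    (j k : ℤ) :
    ⟪(j : ℝ)⟫ ^ (s - m) *
        ‖(χ (((j : ℝ) - k) / (δ * ⟪(j : ℝ) + k⟫)) : ℂ) * b (j - k) (((j : ℝ) + k) / 2)‖ ≤
      K * 4 ^ |m| * 4 ^ |s| * ⟪((j - k : ℤ) : ℝ)⟫ ^ (-γ₀) * ⟪(k : ℝ)⟫ ^ s := by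
  set x : ℝ := (j : ℝ)
  set y : ℝ := (k : ℝ)
  set a := ⟪((j - k : ℤ) : ℝ)⟫ ^ (-γ₀)
  by_cases hz : χ ((x - y) / (δ * ⟪x + y⟫)) = 0
  · rw [hz, Complex.ofReal_zero, zero_mul, norm_zero, mul_zero]
    positivity
  have hpos : ∀ z : ℝ, 0 < ⟪z⟫ := fun z => one_pos.trans_le (le_max_left _ _)
  have hd : |x - y| ≤ ⟪x + y⟫ / 2 := abs_le_half_of_cutoff_ne_zero hχ hδ0 hδ1 (hpos _) hz
  obtain ⟨hx₁, hx₂⟩ := max_one_abs_le_and_le_four_mul hd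
  obtain ⟨hy₁, hy₂⟩ := max_one_abs_le_and_le_four_mul (x := y) (y := x)
    (by rwa [abs_sub_comm, add_comm])
  rw [add_comm y x] at hy₁ hy₂
  obtain ⟨hξ₁, hξ₂⟩ := max_one_abs_le_and_le_four_mul (x := (x + y) / 2) (y := (x + y) / 2)
    (by rw [sub_self, abs_zero]; positivity)
  rw [add_halves] at hξ₁ hξ₂
  have hm := rpow_le_rpow_abs_mul_rpow m (hpos _) (hpos x) (hξ₁.trans hx₂) (hx₁.trans hξ₂)
  have hs := rpow_le_rpow_abs_mul_rpow s (hpos x) (hpos y) (hx₁.trans hy₂) (hy₁.trans hx₂)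
  have hsplit : ⟪x⟫ ^ s = ⟪x⟫ ^ (s - m) * ⟪x⟫ ^ m := by
    rw [← Real.rpow_add (hpos x), sub_add_cancel]
  rw [norm_mul, Complex.norm_real, Real.norm_of_nonneg (hχ0 _)]
  calc ⟪x⟫ ^ (s - m) * (χ ((x - y) / (δ * ⟪x + y⟫)) * ‖b (j - k) ((x + y) / 2)‖)
      ≤ ⟪x⟫ ^ (s - m) * (1 * (K * a * ⟪(x + y) / 2⟫ ^ m)) := by
        gcongr
        exacts [hχ1 _, hb _ _]
    _ ≤ ⟪x⟫ ^ (s - m) * (K * a * (4 ^ |m| * ⟪x⟫ ^ m)) := by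
        rw [one_mul]; gcongr
    _ = K * 4 ^ |m| * a * ⟪x⟫ ^ s := by rw [hsplit]; ring
    _ ≤ K * 4 ^ |m| * a * (4 ^ |s| * ⟪y⟫ ^ s) := by gcongr
    _ = K * 4 ^ |m| * 4 ^ |s| * a * ⟪y⟫ ^ s := by ring

theorem sobolevWeight_paraWn_le (hδ0 : 0 < δ) (hδ1 : δ ≤ 1 / 4)
    (hχ0 : ∀ x, 0 ≤ χ x) (hχ1 : ∀ x, χ x ≤ 1) (hχ : ∀ x : ℝ, (1.9 : ℝ) ≤ |x| → χ x = 0)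
    (hK : 0 ≤ K) (hb : ∀ n : ℤ, ∀ ξ : ℝ, ‖b n ξ‖ ≤ K * ⟪(n : ℝ)⟫ ^ (-γ₀) * ⟪ξ⟫ ^ m)
    (v : ℤ → ℂ) (j : ℤ) :
    sobolevWeight (s - m) (paraWn δ χ b v) j ≤
      ENNReal.ofReal (K * 4 ^ |m| * 4 ^ |s|) *
        ∑' k, ENNReal.ofReal (⟪((j - k : ℤ) : ℝ)⟫ ^ (-γ₀)) * sobolevWeight s v k := by
  rw [sobolevWeight, paraWn, ← ENNReal.tsum_mul_left]
  refine (mul_le_mul_right enorm_tsum_le_tsum_enorm _).trans ?_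
  rw [← ENNReal.tsum_mul_left]
  refine ENNReal.tsum_le_tsum fun k => ?_
  rw [enorm_mul, ← mul_assoc, ← ofReal_norm, ← ENNReal.ofReal_mul (by positivity), sobolevWeight,
    ← mul_assoc, ← ENNReal.ofReal_mul (by positivity), ← mul_assoc,
    ← ENNReal.ofReal_mul (by positivity)]
  gcongr ?_ * _
  exact ENNReal.ofReal_le_ofReal
    (rpow_mul_norm_cutoff_mul_symbol_le hδ0 hδ1 hχ0 hχ1 hχ hK hb j k)

theorem tsum_sobolevWeight_paraWn_sq_le (hδ0 : 0 < δ) (hδ1 : δ ≤ 1 / 4)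
    (hχ0 : ∀ x, 0 ≤ χ x) (hχ1 : ∀ x, χ x ≤ 1) (hχ : ∀ x : ℝ, (1.9 : ℝ) ≤ |x| → χ x = 0)
    (hK : 0 ≤ K) (hb : ∀ n : ℤ, ∀ ξ : ℝ, ‖b n ξ‖ ≤ K * ⟪(n : ℝ)⟫ ^ (-γ₀) * ⟪ξ⟫ ^ m)
    (v : ℤ → ℂ) :
    ∑' j, sobolevWeight (s - m) (paraWn δ χ b v) j ^ 2 ≤
      (ENNReal.ofReal (K * 4 ^ |m| * 4 ^ |s|) *
          ∑' n : ℤ, ENNReal.ofReal (⟪(n : ℝ)⟫ ^ (-γ₀))) ^ 2 *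
        ∑' k, sobolevWeight s v k ^ 2 :=
  calc ∑' j, sobolevWeight (s - m) (paraWn δ χ b v) j ^ 2
      ≤ ∑' j, (ENNReal.ofReal (K * 4 ^ |m| * 4 ^ |s|) *
          ∑' k, ENNReal.ofReal (⟪((j - k : ℤ) : ℝ)⟫ ^ (-γ₀)) * sobolevWeight s v k) ^ 2 := by
        gcongr with j
        exact sobolevWeight_paraWn_le hδ0 hδ1 hχ0 hχ1 hχ hK hb v j
    _ ≤ _ := by
        simp_rw [mul_pow, ENNReal.tsum_mul_left, mul_assoc]
        gcongr
        exact ENNReal.tsum_conv_sq_le _ _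

end paraWn

/-- Action of a paradifferential operator with a symbol of limited smoothness
(Fourier-coefficient form): `‖Op^{BW}(b)v‖_{s-m} ≤ C K ‖v‖_s`. -/
theorem paradifferential_action_limited_smoothness (m s γ₀ : ℝ) (hγ₀ : 1 < γ₀)
    (δ : ℝ) (hδ0 : 0 < δ) (hδ1 : δ ≤ 1 / 4) :
    ∃ C : ℝ, 0 < C ∧
      ∀ χ : ℝ → ℝ, (∀ x : ℝ, 0 ≤ χ x) → (∀ x : ℝ, χ x ≤ 1) →
        (∀ x : ℝ, (1.9 : ℝ) ≤ |x| → χ x = 0) →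
      ∀ K : ℝ, 0 < K →
      ∀ b : ℤ → ℝ → ℂ,
        (∀ n : ℤ, ∀ ξ : ℝ,
          ‖b n ξ‖ ≤ K * (max 1 |(n : ℝ)|) ^ (-γ₀) * (max 1 |ξ|) ^ m) →
      ∀ v : ℤ → ℂ, HSummable s v →
        HSummable (s - m) (paraWn δ χ b v) ∧
          Hnorm (s - m) (paraWn δ χ b v) ≤ C * K * Hnorm s v := by
  have ha := summable_max_one_abs_rpow_neg hγ₀
  have hA : 0 < ∑' n : ℤ, ⟪(n : ℝ)⟫ ^ (-γ₀) :=
    ha.tsum_pos (fun n => by positivity) 0 (by norm_num)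
  refine ⟨4 ^ |m| * 4 ^ |s| * ∑' n : ℤ, ⟪(n : ℝ)⟫ ^ (-γ₀), by positivity,
    fun χ hχ0 hχ1 hχ K hK b hb v hv => ?_⟩
  refine hSummable_and_hnorm_le_of_tsum_sobolevWeight_sq_le (by positivity) hv ?_
  convert tsum_sobolevWeight_paraWn_sq_le hδ0 hδ1 hχ0 hχ1 hχ hK.le hb v using 3
  rw [← ENNReal.ofReal_tsum_of_nonneg (fun n => by positivity) ha,
    ← ENNReal.ofReal_mul (by positivity)]
  congr 1
  ring
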